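/- arXiv:1305.7369 — 8 statements merged into one kernel-verified Lean document; each statement's English description precedes it below -/
import Mathlib

section
/- For an infinite discrete abelian group D, the group of all homomorphisms from D to the circle group has cardinality 2^|D|. -/
open Cardinal Set AddSubgroup

noncomputable section Stmt0Aux

namespace Stmt0Aux

local notation "π" => Real.pi

/-- The additive circle of circumference `2π`. -/
abbrev A : Type := AddCircle (2 * π)

instance : Fact ((0:ℝ) < 2 * π) := ⟨by positivity⟩

lemma mk_A : #A = Cardinal.continuum := by
  rw [Cardinal.mk_congr (AddCircle.equivIco (2 * π) 0)]
  exact Cardinal.mk_Ico_real (by positivity)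

/-- Extension of `A`-valued characters along injective maps (injectivity of divisible groups). -/
lemma exists_extension {G : Type} [AddCommGroup G] {X : Type} [AddCommGroup X]
    (f : X →+ G) (hf : Function.Injective f) (g : X →+ A) :
    ∃ h : G →+ A, ∀ x, h (f x) = g x := by
  obtain ⟨h, hh⟩ := (Module.Baer.of_divisible A).injective.out
    f.toIntLinearMap hf g.toIntLinearMap
  exact ⟨h.toAddMonoidHom, hh⟩

lemma exists_extension' {G : Type} [AddCommGroup G] (H : AddSubgroup G) (χ : H →+ A) :
    ∃ h : G →+ A, ∀ x : H, h x = χ x :=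
  exists_extension H.subtype Subtype.val_injective χ

/-- The embedding of `ℚ/ℤ` into `A`. -/
def ratHom : ℚ →+ ℝ :=
  AddMonoidHom.mk' (fun q => (q : ℝ) * (2 * π)) (by intro a b; push_cast; ring)

def j : AddCircle (1 : ℚ) →+ A :=
  QuotientAddGroup.lift (AddSubgroup.zmultiples (1 : ℚ))
    ((QuotientAddGroup.mk' (AddSubgroup.zmultiples (2 * π))).comp ratHom)
    (by
      rintro q ⟨n, rfl⟩
      rw [AddMonoidHom.mem_ker, AddMonoidHom.comp_apply, QuotientAddGroup.mk'_apply,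
        QuotientAddGroup.eq_zero_iff]
      exact AddSubgroup.mem_zmultiples_iff.mpr
        ⟨n, by simp [ratHom, zsmul_eq_mul]⟩)

lemma j_injective : Function.Injective j := by
  rw [injective_iff_map_eq_zero]
  intro a ha
  induction a using QuotientAddGroup.induction_on with
  | H q =>
    rw [QuotientAddGroup.eq_zero_iff]
    have hq : ((ratHom q : ℝ) : A) = 0 := ha
    rw [QuotientAddGroup.eq_zero_iff] at hq
    obtain ⟨n, hn⟩ := AddSubgroup.mem_zmultiples_iff.mp hq
    have h1 : (n:ℝ) * (2*π) = (q:ℝ) * (2*π) := by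
      simpa [ratHom, zsmul_eq_mul] using hn
    have h2 : (2*π:ℝ) ≠ 0 := by positivity
    have h3 := mul_right_cancel₀ h2 h1
    have hq' : (n:ℚ) = q := by exact_mod_cast h3
    exact AddSubgroup.mem_zmultiples_iff.mpr ⟨n, by simpa [zsmul_eq_mul] using hq'⟩

/-- Separation: a character vanishing on a subgroup and nonvanishing at a point outside it. -/
lemma exists_sep {G : Type} [AddCommGroup G] (H : AddSubgroup G) {x : G} (hx : x ∉ H) :
    ∃ ψ : G →+ A, (∀ h ∈ H, ψ h = 0) ∧ ψ x ≠ 0 := by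
  have hxz : ((x : G ⧸ H)) ≠ 0 := by rwa [ne_eq, QuotientAddGroup.eq_zero_iff]
  obtain ⟨c, hc⟩ := CharacterModule.exists_character_apply_ne_zero_of_ne_zero hxz
  refine ⟨(j.comp ((c : (G ⧸ H) →+ AddCircle (1:ℚ)))).comp (QuotientAddGroup.mk' H), ?_, ?_⟩
  · intro h hh
    have : ((h : G ⧸ H)) = 0 := (QuotientAddGroup.eq_zero_iff h).2 hh
    simp [this]
  · intro hcon
    simp only [AddMonoidHom.comp_apply, QuotientAddGroup.mk'_apply] at hcon
    exact hc (j_injective (by simpa using (show j (c (x : G ⧸ H)) = 0 from hcon)))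

/-! ### The Zorn construction -/

section Zorn

variable {G : Type} [AddCommGroup G]

/-- Restriction of a boolean labelling. -/
def res {s t : Set G} (h : s ⊆ t) (f : t → Bool) : s → Bool := fun u => f ⟨u.1, h u.2⟩

/-- A partial family of characters: a set `T`, together with an injection from
boolean labellings of `T` into characters of `closure T`. -/
structure PC (G : Type) [AddCommGroup G] where
  T : Set G
  c : (T → Bool) → (closure T →+ A)
  inj : Function.Injective c

instance : Preorder (PC G) where
  le P Q := ∃ h : P.T ⊆ Q.T, ∀ f : Q.T → Bool, ∀ x : closure P.T,
      Q.c f (AddSubgroup.inclusion (closure_mono h) x) = P.c (res h f) x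
  le_refl P := ⟨subset_rfl, fun f x => rfl⟩
  le_trans P Q R := fun ⟨hpq, cpq⟩ ⟨hqr, cqr⟩ => ⟨hpq.trans hqr, fun f x => by
    have h1 := cqr f (AddSubgroup.inclusion (closure_mono hpq) x)
    have h2 := cpq (res hqr f) x
    exact h1.trans h2⟩

def pcBot : PC G where
  T := ∅
  c := fun _ => 0
  inj := fun f g _ => funext fun t => absurd t.2 (Set.notMem_empty t.1)

section Chain

variable (C : Set (PC G))

def TU : Set G := ⋃ P : C, (P : PC G).T

lemma subTU (P : C) : (P : PC G).T ⊆ TU C := Set.subset_iUnion (fun P : C => (P : PC G).T) P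

lemma exists_mem_chain (hC : IsChain (· ≤ ·) C) (hne : C.Nonempty) (x : closure (TU C)) :
    ∃ P : C, (x : G) ∈ closure (P : PC G).T := by
  have hNe : Nonempty C := hne.to_subtype
  have hdir : Directed (· ≤ ·) (fun P : C => closure (P : PC G).T) := by
    intro a b
    rcases hC.total a.2 b.2 with h | h
    · exact ⟨b, closure_mono h.1, le_rfl⟩
    · exact ⟨a, le_rfl, closure_mono h.1⟩
  have hx : (x : G) ∈ closure (⋃ P : C, (P : PC G).T) := x.2
  rw [AddSubgroup.closure_iUnion] at hx
  exact (AddSubgroup.mem_iSup_of_directed hdir).mp hx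

/-- The glued value function. -/
def gv (hC : IsChain (· ≤ ·) C) (hne : C.Nonempty) (f : TU C → Bool) (x : closure (TU C)) : A :=
  (((exists_mem_chain C hC hne x).choose : PC G)).c
    (res (subTU C (exists_mem_chain C hC hne x).choose) f)
    ⟨x.1, (exists_mem_chain C hC hne x).choose_spec⟩

lemma gv_eq (hC : IsChain (· ≤ ·) C) (hne : C.Nonempty) (f : TU C → Bool) (x : closure (TU C)) (P : C)
    (hx : (x : G) ∈ closure (P : PC G).T) :
    gv C hC hne f x = (P : PC G).c (res (subTU C P) f) ⟨x.1, hx⟩ := by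
  set Q := (exists_mem_chain C hC hne x).choose with hQ
  have hxQ : (x : G) ∈ closure (Q : PC G).T := (exists_mem_chain C hC hne x).choose_spec
  rcases hC.total Q.2 P.2 with h | h
  · have := h.2 (res (subTU C P) f) ⟨x.1, hxQ⟩
    have heq : AddSubgroup.inclusion (closure_mono h.1) (⟨x.1, hxQ⟩ : closure (Q : PC G).T)
        = (⟨x.1, hx⟩ : closure (P : PC G).T) := Subtype.ext rfl
    rw [heq] at this
    exact (this.trans (by rfl)).symm
  · have := h.2 (res (subTU C Q) f) ⟨x.1, hx⟩
    have heq : AddSubgroup.inclusion (closure_mono h.1) (⟨x.1, hx⟩ : closure (P : PC G).T)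
        = (⟨x.1, hxQ⟩ : closure (Q : PC G).T) := Subtype.ext rfl
    rw [heq] at this
    exact this.trans (by rfl)

def glueHom (hC : IsChain (· ≤ ·) C) (hne : C.Nonempty) (f : TU C → Bool) : closure (TU C) →+ A :=
  AddMonoidHom.mk' (gv C hC hne f) (by
    intro x y
    obtain ⟨P, hP⟩ := exists_mem_chain C hC hne x
    obtain ⟨Q, hQ⟩ := exists_mem_chain C hC hne y
    obtain ⟨R, hPR, hQR⟩ : ∃ R : C, (P : PC G) ≤ R ∧ (Q : PC G) ≤ R := by
      rcases hC.total P.2 Q.2 with h | h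
      · exact ⟨Q, h, le_rfl⟩
      · exact ⟨P, le_rfl, h⟩
    have hxR : (x : G) ∈ closure (R : PC G).T := closure_mono hPR.1 hP
    have hyR : (y : G) ∈ closure (R : PC G).T := closure_mono hQR.1 hQ
    have hxyR : ((x + y : closure (TU C)) : G) ∈ closure (R : PC G).T :=
      AddSubgroup.add_mem _ hxR hyR
    rw [gv_eq C hC hne f x R hxR, gv_eq C hC hne f y R hyR, gv_eq C hC hne f (x+y) R hxyR]
    have : (⟨((x + y : closure (TU C)) : G), hxyR⟩ : closure (R : PC G).T)
        = ⟨x.1, hxR⟩ + ⟨y.1, hyR⟩ := Subtype.ext rfl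
    rw [this, map_add])

def pcUB (hC : IsChain (· ≤ ·) C) (hne : C.Nonempty) : PC G where
  T := TU C
  c := glueHom C hC hne
  inj := by
    intro f g hfg
    funext t
    obtain ⟨P, hP⟩ : ∃ P : C, t.1 ∈ (P : PC G).T := Set.mem_iUnion.mp t.2
    have hres : res (subTU C P) f = res (subTU C P) g := by
      apply (P : PC G).inj
      ext x
      have hx : (x : G) ∈ closure (TU C) := closure_mono (subTU C P) x.2
      have h1 := gv_eq C hC hne f ⟨x.1, hx⟩ P x.2
      have h2 := gv_eq C hC hne g ⟨x.1, hx⟩ P x.2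
      have h3 : gv C hC hne f ⟨x.1, hx⟩ = gv C hC hne g ⟨x.1, hx⟩ :=
        DFunLike.congr_fun hfg ⟨x.1, hx⟩
      rw [h1, h2] at h3
      simpa using h3
    have := congrFun hres ⟨t.1, hP⟩
    simpa [res] using this

lemma le_pcUB (hC : IsChain (· ≤ ·) C) (hne : C.Nonempty) (P : PC G) (hP : P ∈ C) : P ≤ pcUB C hC hne := by
  refine ⟨subTU C ⟨P, hP⟩, fun f x => ?_⟩
  exact gv_eq C hC hne f
    (AddSubgroup.inclusion (closure_mono (subTU C ⟨P, hP⟩)) x) ⟨P, hP⟩ x.2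

end Chain

lemma maximal_closure_eq_top (m : PC G) (hm : ∀ a, m ≤ a → a ≤ m) :
    closure m.T = ⊤ := by
  by_contra hne
  obtain ⟨x, hx⟩ : ∃ x : G, x ∉ closure m.T := by
    by_contra h
    push_neg at h
    exact hne ((AddSubgroup.eq_top_iff' _).mpr h)
  obtain ⟨ψ, hψ0, hψx⟩ := exists_sep (closure m.T) hx
  have hxT : x ∉ m.T := fun h => hx (AddSubgroup.subset_closure h)
  set T' : Set G := insert x m.T with hT'
  have hsub : m.T ⊆ T' := Set.subset_insert x m.T
  have hxmem : x ∈ T' := Set.mem_insert x m.T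
  -- choose extensions to all of G
  have hext : ∀ f₀ : m.T → Bool, ∃ E : G →+ A, ∀ y : closure m.T, E y = m.c f₀ y :=
    fun f₀ => exists_extension' (closure m.T) (m.c f₀)
  choose E hE using hext
  set c' : (T' → Bool) → (closure T' →+ A) := fun f =>
    (E (res hsub f) + (if f ⟨x, hxmem⟩ then ψ else 0)).comp (closure T').subtype with hc'
  have key : ∀ (f : T' → Bool) (y : closure m.T),
      c' f (AddSubgroup.inclusion (closure_mono hsub) y) = m.c (res hsub f) y := by
    intro f y
    have h1 : c' f (AddSubgroup.inclusion (closure_mono hsub) y)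
        = E (res hsub f) y.1 + (if f ⟨x, hxmem⟩ then ψ else 0) y.1 := rfl
    rw [h1, hE (res hsub f) y]
    have : (if f ⟨x, hxmem⟩ then ψ else 0) y.1 = 0 := by
      split
      · exact hψ0 y.1 y.2
      · rfl
    rw [this, add_zero]
  have hinj : Function.Injective c' := by
    intro f g hfg
    have hres : res hsub f = res hsub g := by
      apply m.inj
      ext y
      have h0 : c' f (AddSubgroup.inclusion (closure_mono hsub) y)
          = c' g (AddSubgroup.inclusion (closure_mono hsub) y) :=
        DFunLike.congr_fun hfg _
      rw [key f y, key g y] at h0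
      exact h0
    have hbx : f ⟨x, hxmem⟩ = g ⟨x, hxmem⟩ := by
      by_contra hb
      have hxcl : x ∈ closure T' := AddSubgroup.subset_closure hxmem
      have := DFunLike.congr_fun hfg (⟨x, hxcl⟩ : closure T')
      have h1 : c' f ⟨x, hxcl⟩
          = E (res hsub f) x + (if f ⟨x, hxmem⟩ then ψ else 0) x := rfl
      have h2 : c' g ⟨x, hxcl⟩
          = E (res hsub g) x + (if g ⟨x, hxmem⟩ then ψ else 0) x := rfl
      rw [h1, h2, hres] at this
      have h3 : (if f ⟨x, hxmem⟩ then ψ else 0) x = (if g ⟨x, hxmem⟩ then ψ else 0) x :=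
        add_left_cancel this
      rcases Bool.eq_false_or_eq_true (f ⟨x, hxmem⟩) with hf | hf <;>
        rcases Bool.eq_false_or_eq_true (g ⟨x, hxmem⟩) with hg | hg <;>
          simp [hf, hg] at h3 hb ⊢
      · exact hψx h3
      · exact hψx h3.symm
    funext t
    rcases t.2 with ht | ht
    · have : t = ⟨x, hxmem⟩ := Subtype.ext ht
      rw [this]; exact hbx
    · have := congrFun hres ⟨t.1, ht⟩
      simpa [res] using this
  set P' : PC G := ⟨T', c', hinj⟩ with hP'
  have hle : m ≤ P' := ⟨hsub, key⟩
  obtain ⟨h1, _⟩ := hm P' hle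
  exact hxT (h1 hxmem)

/-- Main structural result: there is a generating set `T` with an injection of `T → Bool`
into the characters of `G`. -/
lemma exists_generating_injection (G : Type) [AddCommGroup G] :
    ∃ T : Set G, closure T = ⊤ ∧
      ∃ ι : (T → Bool) → (G →+ A), Function.Injective ι := by
  obtain ⟨m, hm⟩ := zorn_le (α := PC G) (by
    intro C hC
    rcases C.eq_empty_or_nonempty with rfl | hne
    · exact ⟨pcBot, fun y hy => absurd hy (Set.notMem_empty y)⟩
    · exact ⟨pcUB C hC hne, fun P hP => le_pcUB C hC hne P hP⟩)
  have htop : closure m.T = ⊤ := maximal_closure_eq_top m (fun a h => hm h)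
  refine ⟨m.T, htop, ?_⟩
  have e : ∀ g : G, g ∈ closure m.T := fun g => htop ▸ AddSubgroup.mem_top g
  set emb : G →+ closure m.T :=
    AddMonoidHom.mk' (fun g => ⟨g, e g⟩) (fun a b => Subtype.ext rfl) with hemb
  refine ⟨fun f => (m.c f).comp emb, ?_⟩
  intro f g hfg
  apply m.inj
  ext y
  have h0 : (m.c f).comp emb y.1 = (m.c g).comp emb y.1 := DFunLike.congr_fun hfg y.1
  have hy : emb y.1 = y := Subtype.ext rfl
  simpa [AddMonoidHom.comp_apply, hy] using h0

end Zorn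

/-- Finite sets of torsion elements generate finite subgroups. -/
lemma finite_closure_of_torsion {G : Type} [AddCommGroup G] (s : Finset G)
    (h : ∀ x ∈ s, IsOfFinAddOrder x) :
    ((closure (s : Set G) : AddSubgroup G) : Set G).Finite := by
  classical
  induction s using Finset.induction_on with
  | empty => simp [AddSubgroup.closure_empty]
  | @insert a s ha ih =>
    have hins : ((insert a s : Finset G) : Set G) = {a} ∪ (s : Set G) := by
      simp
    rw [hins, AddSubgroup.closure_union]
    have h1 : closure {a} = AddSubgroup.zmultiples a := (AddSubgroup.zmultiples_eq_closure a).symm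
    rw [h1]
    have hnorm : (closure (s : Set G)).Normal := inferInstance
    rw [AddSubgroup.add_normal (AddSubgroup.zmultiples a) (closure (s : Set G))]
    exact Set.Finite.add ((h a (Finset.mem_insert_self a s)).finite_zmultiples)
      (ih (fun x hx => h x (Finset.mem_insert_of_mem hx)))

/-- The core additive theorem. -/
theorem core (G : Type) [AddCommGroup G] [Infinite G] :
    #(G →+ A) = 2 ^ #G := by
  have haleG : ℵ₀ ≤ #G := Cardinal.aleph0_le_mk G
  apply le_antisymm
  · -- upper bound
    have h1 : #(G →+ A) ≤ #(G → A) :=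
      Cardinal.mk_le_of_injective (f := fun (h : G →+ A) => (h : G → A))
        (fun a b hab => DFunLike.coe_injective hab)
    have h2 : #(G → A) = (2 ^ ℵ₀ : Cardinal) ^ #G := by
      rw [← Cardinal.power_def, mk_A, Cardinal.two_power_aleph0]
    rw [h2, ← Cardinal.power_mul] at h1
    rwa [Cardinal.mul_eq_right haleG haleG Cardinal.aleph0_ne_zero] at h1
  · -- lower bound
    obtain ⟨T, hT, ι, hι⟩ := exists_generating_injection G
    have hTbound : 2 ^ #T ≤ #(G →+ A) := by
      calc 2 ^ #T = #(T → Bool) := by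
            rw [← Cardinal.power_def, Cardinal.mk_bool]
        _ ≤ #(G →+ A) := Cardinal.mk_le_of_injective hι
    -- surjection from finitely supported functions
    have hspan : Submodule.span ℤ (Set.range (Subtype.val : T → G)) = ⊤ := by
      rw [Subtype.range_coe]
      apply Submodule.toAddSubgroup_injective
      rw [Submodule.span_int_eq_addSubgroupClosure, hT]
      rfl
    have hsurj : Function.Surjective
        (Finsupp.linearCombination ℤ (Subtype.val : T → G)) := by
      rw [← LinearMap.range_eq_top, Finsupp.range_linearCombination, hspan]
    have hGle : #G ≤ #(T →₀ ℤ) := Cardinal.mk_le_of_surjective hsurj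
    by_cases hTinf : Infinite T
    · -- infinite generating set
      have hTale : ℵ₀ ≤ #T := Cardinal.aleph0_le_mk T
      have h4 : #(T →₀ ℤ) = #T := by
        rw [Cardinal.mk_finsupp_of_infinite T ℤ, Cardinal.mk_int, sup_eq_left.mpr hTale]
      have hG2 : #G ≤ #T := by rwa [h4] at hGle
      calc 2 ^ #G ≤ 2 ^ #T := Cardinal.power_le_power_left (by norm_num) hG2
        _ ≤ #(G →+ A) := hTbound
    · -- finite generating set: G is countable
      have hfinT : Finite T := not_infinite_iff_finite.mp hTinf
      have hcnt : Countable (T →₀ ℤ) :=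
        Function.Injective.countable
          (f := ((⇑) : (T →₀ ℤ) → (T → ℤ))) DFunLike.coe_injective
      have hGcnt : #G ≤ ℵ₀ := hGle.trans (Cardinal.mk_le_aleph0)
      have hGeq : #G = ℵ₀ := le_antisymm hGcnt haleG
      -- there is an element of infinite order
      obtain ⟨x, hxord⟩ : ∃ x : G, ¬ IsOfFinAddOrder x := by
        by_contra hall
        push_neg at hall
        have hTsetfin : T.Finite := Set.finite_coe_iff.mp hfinT
        have hfin : ((closure T : AddSubgroup G) : Set G).Finite := by
          have h5 := finite_closure_of_torsion hTsetfin.toFinset (fun x _ => hall x)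
          rwa [Set.Finite.coe_toFinset] at h5
        rw [hT] at hfin
        have : (Set.univ : Set G).Finite := by
          simpa using hfin
        exact Set.infinite_univ this
      -- for each `t : A` there is a character sending `x` to `t`
      have hchar : ∀ t : A, ∃ h : G →+ A, h x = t := by
        intro t
        have hfinj : Function.Injective ((zmultiplesHom G) x) := by
          have := (injective_zsmul_iff_not_isOfFinAddOrder (x := x)).mpr hxord
          intro a b hab
          exact this hab
        obtain ⟨h, hh⟩ := exists_extension ((zmultiplesHom G) x) hfinj ((zmultiplesHom A) t)
        refine ⟨h, ?_⟩
        have h1 := hh 1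
        simpa using h1
      choose Φ hΦ using hchar
      have hΦinj : Function.Injective Φ := by
        intro a b hab
        rw [← hΦ a, ← hΦ b, hab]
      have hAle : #A ≤ #(G →+ A) := Cardinal.mk_le_of_injective hΦinj
      rw [hGeq, Cardinal.two_power_aleph0, ← mk_A]
      exact hAle

end Stmt0Aux

end Stmt0Aux

/-- For an infinite discrete abelian group `D`, the group of all homomorphisms from `D`
to the circle group has cardinality `2 ^ |D|`. -/
theorem stmt0 (D : Type) [CommGroup D] [Infinite D]
    [TopologicalSpace D] [DiscreteTopology D] :
    Cardinal.mk (D →* Circle) = 2 ^ Cardinal.mk D := by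
  classical
  -- transfer to the additive setting
  have e₂ : Stmt0Aux.A ≃+ Additive Circle :=
    { toEquiv := (AddCircle.homeomorphCircle').toEquiv.trans Additive.ofMul
      map_add' := fun a b => by
        show Additive.ofMul (Real.Angle.toCircle ((a : Real.Angle) + (b : Real.Angle))) = _
        exact congrArg Additive.ofMul (Real.Angle.toCircle_add (a : Real.Angle) b) }
  have e : (D →* Circle) ≃ (Additive D →+ Stmt0Aux.A) :=
    MonoidHom.toAdditive.trans (AddEquiv.addMonoidHomCongrRight
      e₂.symm).toEquiv
  have hInf : Infinite (Additive D) := ‹Infinite D›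
  rw [Cardinal.mk_congr e, Stmt0Aux.core (Additive D)]
  rfl
end

section
/- For a Hausdorff topological abelian group X, the restriction of the uniform topology to the subgroup X^(N) of eventually-zero sequences coincides with the restriction of the product topology if and only if X is the trivial group. -/
open Filter Topology

/-- The uniform and product topologies agree on the subgroup of eventually-zero
sequences iff `X` is trivial. -/
theorem stmt4 (X : Type) [AddCommGroup X] [TopologicalSpace X] [IsTopologicalAddGroup X]
    [T2Space X]
    (τ : TopologicalSpace (ℕ → X)) (hg : @IsTopologicalAddGroup (ℕ → X) τ _)
    (hb : (@nhds (ℕ → X) τ 0).HasBasis (fun V : Set X => V ∈ 𝓝 (0 : X))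
      (fun V : Set X => {f : ℕ → X | ∀ n, f n ∈ V})) :
    (TopologicalSpace.induced
        (Subtype.val : {f : ℕ → X // ∀ᶠ n in atTop, f n = 0} → (ℕ → X)) τ =
      TopologicalSpace.induced
        (Subtype.val : {f : ℕ → X // ∀ᶠ n in atTop, f n = 0} → (ℕ → X))
        (Pi.topologicalSpace : TopologicalSpace (ℕ → X))) ↔
    (∀ x : X, x = 0) := by
  constructor
  · intro h x
    by_contra hx
    -- V = complement of {x} is a neighborhood of 0
    have hV : ({x}ᶜ : Set X) ∈ 𝓝 (0 : X) :=
      (isOpen_compl_singleton).mem_nhds (by simpa using (Ne.symm hx))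
    -- compare neighborhood filters of 0 in the two induced topologies
    have hnhds : Filter.comap (Subtype.val : {f : ℕ → X // ∀ᶠ n in atTop, f n = 0} → (ℕ → X))
        (@nhds (ℕ → X) τ 0) =
        Filter.comap (Subtype.val : {f : ℕ → X // ∀ᶠ n in atTop, f n = 0} → (ℕ → X))
        (@nhds (ℕ → X) Pi.topologicalSpace 0) := by
      have h0 : (Subtype.val (⟨0, by simp⟩ : {f : ℕ → X // ∀ᶠ n in atTop, f n = 0})) =
          (0 : ℕ → X) := rfl
      have h1 := @nhds_induced _ _ τ
        (Subtype.val : {f : ℕ → X // ∀ᶠ n in atTop, f n = 0} → (ℕ → X))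
        ⟨0, by simp⟩
      have h2 := @nhds_induced _ _ Pi.topologicalSpace
        (Subtype.val : {f : ℕ → X // ∀ᶠ n in atTop, f n = 0} → (ℕ → X))
        ⟨0, by simp⟩
      rw [h0] at h1 h2
      rw [← h1, ← h2, h]
    -- the uniform basic set pulled back
    have hmem : (Subtype.val ⁻¹' {f : ℕ → X | ∀ n, f n ∈ ({x}ᶜ : Set X)}) ∈
        Filter.comap (Subtype.val : {f : ℕ → X // ∀ᶠ n in atTop, f n = 0} → (ℕ → X))
        (@nhds (ℕ → X) τ 0) :=
      Filter.preimage_mem_comap (hb.mem_of_mem hV)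
    rw [hnhds] at hmem
    obtain ⟨T, hT, hTsub⟩ := hmem
    rw [nhds_pi, Filter.mem_pi] at hT
    obtain ⟨I, hIfin, W, hW, hWsub⟩ := hT
    obtain ⟨n, hn⟩ := hIfin.infinite_compl.nonempty
    set f : ℕ → X := fun m => if m = n then x else 0 with hf
    have hfe : ∀ᶠ m in atTop, f m = 0 := by
      refine eventually_atTop.2 ⟨n + 1, fun m hm => ?_⟩
      simp only [hf]
      rw [if_neg (by omega)]
    have hfT : f ∈ T := by
      apply hWsub
      intro i hi
      have : f i = 0 := by
        simp only [hf]
        rw [if_neg (by rintro rfl; exact hn hi)]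
      rw [this]
      exact mem_of_mem_nhds (hW i)
    have := hTsub (show (⟨f, hfe⟩ : {f : ℕ → X // ∀ᶠ n in atTop, f n = 0}) ∈
      Subtype.val ⁻¹' T from hfT) n
    simp only [hf, if_pos rfl] at this
    exact this rfl
  · intro hX
    have : Subsingleton X := ⟨fun a b => by rw [hX a, hX b]⟩
    have hsub : Subsingleton {f : ℕ → X // ∀ᶠ n in atTop, f n = 0} := by
      constructor
      rintro ⟨f, _⟩ ⟨g, _⟩
      ext n
      simp only [hX (f n), hX (g n)]
    apply TopologicalSpace.ext
    ext s
    rcases Set.eq_empty_or_nonempty s with rfl | ⟨a, ha⟩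
    · simp
    · have : s = Set.univ := Set.eq_univ_of_forall fun b => by
        rwa [Subsingleton.elim b a]
      rw [this]
      simp
end

section
/- If X is a metrizable topological abelian group and the uniform topology and the box topology on X^N agree on the subgroup of eventually-zero sequences, then X is discrete. -/
open Filter Topology

/-- If `X` is metrizable and the uniform and box topologies agree on the subgroup of
eventually-zero sequences, then `X` is discrete. -/
theorem stmt5 (X : Type) [AddCommGroup X] [TopologicalSpace X] [IsTopologicalAddGroup X]
    [TopologicalSpace.MetrizableSpace X]
    (τ : TopologicalSpace (ℕ → X)) (hg : @IsTopologicalAddGroup (ℕ → X) τ _)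
    (hb : (@nhds (ℕ → X) τ 0).HasBasis (fun V : Set X => V ∈ 𝓝 (0 : X))
      (fun V : Set X => {f : ℕ → X | ∀ n, f n ∈ V}))
    (heq : TopologicalSpace.induced
        (Subtype.val : {f : ℕ → X // ∀ᶠ n in atTop, f n = 0} → (ℕ → X)) τ =
      TopologicalSpace.induced
        (Subtype.val : {f : ℕ → X // ∀ᶠ n in atTop, f n = 0} → (ℕ → X))
        (TopologicalSpace.generateFrom
          {S : Set (ℕ → X) | ∃ U : ℕ → Set X, (∀ n, IsOpen (U n)) ∧ S = Set.univ.pi U})) :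
    DiscreteTopology X := by
  rw [discreteTopology_iff_isOpen_singleton_zero]
  by_contra h0
  obtain ⟨u, hu⟩ := (𝓝 (0 : X)).exists_antitone_basis
  set Y := {f : ℕ → X // ∀ᶠ n in atTop, f n = 0}
  set tbox := TopologicalSpace.generateFrom
    {S : Set (ℕ → X) | ∃ U : ℕ → Set X, (∀ n, IsOpen (U n)) ∧ S = Set.univ.pi U}
  set S : Set (ℕ → X) := Set.univ.pi (fun n => interior (u n)) with hS
  have hSopen : tbox.IsOpen S :=
    TopologicalSpace.GenerateOpen.basic S ⟨_, fun n => isOpen_interior, rfl⟩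
  -- the preimage of S is open in the induced box topology, hence in the induced τ topology
  have hopen : @IsOpen Y (TopologicalSpace.induced (Subtype.val : Y → (ℕ → X)) τ)
      (Subtype.val ⁻¹' S) := by
    rw [heq]
    exact ⟨S, hSopen, rfl⟩
  have hz : (⟨0, Eventually.of_forall fun n => rfl⟩ : Y) ∈ Subtype.val ⁻¹' S := by
    intro n _
    exact mem_interior_iff_mem_nhds.2 (hu.toHasBasis.mem_of_mem trivial)
  have hmem : Subtype.val ⁻¹' S ∈
      @nhds Y (TopologicalSpace.induced (Subtype.val : Y → (ℕ → X)) τ)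
        ⟨0, Eventually.of_forall fun n => rfl⟩ :=
    @IsOpen.mem_nhds _ (TopologicalSpace.induced (Subtype.val : Y → (ℕ → X)) τ) _ _ hopen hz
  rw [nhds_induced (T := τ)] at hmem
  obtain ⟨T, hT, hTS⟩ := Filter.mem_comap.1 hmem
  obtain ⟨V, hV, hVT⟩ := hb.mem_iff.1 hT
  -- since {0} is not open, V contains a nonzero point
  have hx : ∃ x ∈ V, x ≠ 0 := by
    by_contra h
    push_neg at h
    apply h0
    rw [isOpen_iff_mem_nhds]
    rintro a rfl
    exact Filter.mem_of_superset hV fun x hxV => h x hxV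
  obtain ⟨x, hxV, hxne⟩ := hx
  -- pick n with x ∉ u n
  have : {x}ᶜ ∈ 𝓝 (0 : X) :=
    isOpen_compl_singleton.mem_nhds (by simpa using hxne.symm)
  obtain ⟨n, -, hn⟩ := hu.toHasBasis.mem_iff.1 this
  have hxn : x ∉ interior (u n) := fun hx' => hn (interior_subset hx') rfl
  -- build the sequence with x in position n
  set f : ℕ → X := fun m => if m = n then x else 0 with hf
  have hfev : ∀ᶠ m in atTop, f m = 0 :=
    eventually_atTop.2 ⟨n + 1, fun m hm => if_neg (by omega)⟩
  have hfV : ∀ m, f m ∈ V := by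
    intro m
    by_cases hm : m = n <;> simp [hf, hm, hxV, mem_of_mem_nhds hV]
  have : (⟨f, hfev⟩ : Y) ∈ Subtype.val ⁻¹' S := hTS (hVT hfV)
  have := this n (Set.mem_univ n)
  simp only [hf, if_pos rfl] at this
  exact hxn this
end

section
/- If X is a nontrivial Hausdorff topological abelian group, then X^N with the uniform topology has cellularity at least the continuum; in particular it is not separable. -/
open Filter Topology

/-- If `X` is a nontrivial Hausdorff topological abelian group, then `X^ℕ` with the
uniform topology has cellularity at least `𝔠`; in particular it is not separable. -/
theorem stmt8 (X : Type) [AddCommGroup X] [TopologicalSpace X] [IsTopologicalAddGroup X]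
    [T2Space X] (hX : ∃ a : X, a ≠ 0)
    (τ : TopologicalSpace (ℕ → X)) (hg : @IsTopologicalAddGroup (ℕ → X) τ _)
    (hb : (@nhds (ℕ → X) τ 0).HasBasis (fun V : Set X => V ∈ 𝓝 (0 : X))
      (fun V : Set X => {f : ℕ → X | ∀ n, f n ∈ V})) :
    (∃ 𝒰 : Set (Set (ℕ → X)), (∀ U ∈ 𝒰, @IsOpen (ℕ → X) τ U ∧ U.Nonempty) ∧
        𝒰.PairwiseDisjoint id ∧ Cardinal.continuum ≤ Cardinal.mk 𝒰) ∧
      ¬ @TopologicalSpace.SeparableSpace (ℕ → X) τ := by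
  classical
  letI : TopologicalSpace (ℕ → X) := τ
  haveI := hg
  obtain ⟨a, ha⟩ := hX
  -- a neighborhood of 0 avoiding a and -a
  have hVmem : ({a, -a}ᶜ : Set X) ∈ 𝓝 (0 : X) := by
    refine IsOpen.mem_nhds ?_ ?_
    · exact (Set.toFinite {a, -a}).isClosed.isOpen_compl
    · simp only [Set.mem_compl_iff, Set.mem_insert_iff, Set.mem_singleton_iff]
      push_neg
      exact ⟨fun h => ha h.symm, fun h => ha (neg_eq_zero.mp h.symm)⟩
  obtain ⟨W, hW, hWsub⟩ := exists_nhds_half_neg hVmem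
  -- basic set and its interior
  set B : Set (ℕ → X) := {f : ℕ → X | ∀ n, f n ∈ W} with hB
  have hBmem : B ∈ 𝓝 (0 : ℕ → X) := hb.mem_of_mem hW
  have hOint : (0 : ℕ → X) ∈ interior B := mem_interior_iff_mem_nhds.mpr hBmem
  -- the functions f_S
  set F : Set ℕ → (ℕ → X) := fun S n => if n ∈ S then a else 0 with hF
  set U : Set ℕ → Set (ℕ → X) := fun S => (F S + ·) '' interior B with hU
  have hUopen : ∀ S, IsOpen (U S) := fun S =>
    (isOpenMap_add_left (F S)) _ isOpen_interior
  have hUne : ∀ S, (U S).Nonempty := fun S => ⟨F S + 0, 0, hOint, rfl⟩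
  -- key disjointness
  have hdisj : ∀ S T : Set ℕ, S ≠ T → Disjoint (U S) (U T) := by
    intro S T hST
    rw [Set.disjoint_left]
    rintro g ⟨u, hu, rfl⟩ ⟨v, hv, hgv⟩
    have hu' : u ∈ B := interior_subset hu
    have hv' : v ∈ B := interior_subset hv
    obtain ⟨n, hn⟩ : ∃ n, n ∈ S ↔ ¬ n ∈ T := by
      by_contra h
      push_neg at h
      exact hST (Set.ext fun n => by
        have := h n; tauto)
    have hmem : u n - v n ∈ ({a, -a}ᶜ : Set X) := hWsub _ (hu' n) _ (hv' n)
    have key : u n - v n = F T n - F S n := by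
      have h := congrFun hgv n
      simp only [Pi.add_apply] at h
      rw [sub_eq_sub_iff_add_eq_add, add_comm (u n)]
      exact h.symm
    rw [key] at hmem
    apply hmem
    by_cases hnS : n ∈ S
    · have hnT : ¬ n ∈ T := hn.mp hnS
      simp [hF, hnS, hnT]
    · have hnT : n ∈ T := by tauto
      simp [hF, hnS, hnT]
  have hUinj : Function.Injective U := by
    intro S T h
    by_contra hST
    have := hdisj S T hST
    rw [h, disjoint_self] at this
    exact (hUne T).ne_empty this
  have hcard : Cardinal.continuum ≤ Cardinal.mk (Set.range U) := by
    rw [Cardinal.mk_range_eq _ hUinj, Cardinal.mk_set, Cardinal.mk_nat,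
      Cardinal.two_power_aleph0]
  constructor
  · refine ⟨Set.range U, ?_, ?_, by simpa using hcard⟩
    · rintro _ ⟨S, rfl⟩; exact ⟨hUopen S, hUne S⟩
    · rintro _ ⟨S, rfl⟩ _ ⟨T, rfl⟩ hne
      exact hdisj S T (fun h => hne (by rw [h]))
  · rintro ⟨D, hDc, hDd⟩
    have hpick : ∀ S : Set ℕ, ∃ d, d ∈ U S ∩ D :=
      fun S => hDd.inter_open_nonempty _ (hUopen S) (hUne S)
    choose d hd using hpick
    have hdinj : Function.Injective d := by
      intro S T h
      by_contra hST
      exact Set.disjoint_left.mp (hdisj S T hST) (hd S).1 (h ▸ (hd T).1)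
    have h1 : Cardinal.continuum ≤ Cardinal.mk D := by
      have hle : Cardinal.mk (Set ℕ) ≤ Cardinal.mk D :=
        Cardinal.mk_le_of_injective (f := fun S : Set ℕ => (⟨d S, (hd S).2⟩ : D))
          (fun S T h => hdinj (congrArg Subtype.val h))
      refine le_trans ?_ hle
      rw [Cardinal.mk_set, Cardinal.mk_nat, Cardinal.two_power_aleph0]
    have h2 : Cardinal.mk D ≤ Cardinal.aleph0 := hDc.le_aleph0
    exact absurd (h1.trans h2) (not_le.mpr Cardinal.aleph0_lt_continuum)
end

section
/- If X is a separable Hausdorff topological abelian group, then c0(X) with the topology induced by the uniform topology on X^N is separable. -/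
open Filter Topology

/-- If `X` is separable Hausdorff, then `c₀(X)` with the topology induced by the uniform
topology is separable. -/
theorem stmt12 (X : Type) [AddCommGroup X] [TopologicalSpace X] [IsTopologicalAddGroup X]
    [T2Space X] [TopologicalSpace.SeparableSpace X]
    (τ : TopologicalSpace (ℕ → X)) (hg : @IsTopologicalAddGroup (ℕ → X) τ _)
    (hb : (@nhds (ℕ → X) τ 0).HasBasis (fun V : Set X => V ∈ 𝓝 (0 : X))
      (fun V : Set X => {f : ℕ → X | ∀ n, f n ∈ V})) :
    @TopologicalSpace.SeparableSpace {f : ℕ → X // Tendsto f atTop (𝓝 (0 : X))}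
      (TopologicalSpace.induced Subtype.val τ) := by
  letI := τ
  haveI := hg
  obtain ⟨D, Dc, Dd⟩ := TopologicalSpace.exists_countable_dense X
  set D' : Set X := insert 0 D with hD'
  have D'c : D'.Countable := Dc.insert 0
  -- the countable candidate set: eventually-zero sequences with values in `D'`
  set T : Set (ℕ → X) := {g | (∀ n, g n ∈ D') ∧ ∃ N, ∀ n ≥ N, g n = 0} with hT
  have hTc : T.Countable := by
    haveI := D'c.to_subtype
    have hsub : T ⊆ Set.range (fun l : List D' => fun n : ℕ =>
        if h : n < l.length then (l.get ⟨n, h⟩ : X) else 0) := by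
      rintro g ⟨hmem, N, hN⟩
      refine ⟨(List.range N).map (fun n => (⟨g n, hmem n⟩ : D')), ?_⟩
      funext n
      by_cases h : n < N
      · simp [h]
      · simp only [List.length_map, List.length_range]
        rw [dif_neg h]
        exact (hN n (le_of_not_gt h)).symm
    exact Set.Countable.mono hsub (Set.countable_range _)
  refine ⟨⟨Subtype.val ⁻¹' T, hTc.preimage Subtype.val_injective, ?_⟩⟩
  intro f
  rw [mem_closure_iff_nhds]
  intro U hU
  rw [nhds_induced] at hU
  obtain ⟨V, hV, hVU⟩ := hU
  rw [← map_add_left_nhds_zero (f : ℕ → X), Filter.mem_map, hb.mem_iff] at hV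
  obtain ⟨W, hW, hsubW⟩ := hV
  -- eventually `f n ∈ -W`
  have hnegW : -W ∈ 𝓝 (0 : X) := by
    have : Filter.Tendsto (fun x : X => -x) (𝓝 0) (𝓝 (0 : X)) := by
      simpa using (continuous_neg (G := X)).tendsto (0 : X)
    exact this hW
  have hev : ∀ᶠ n in atTop, (f : ℕ → X) n ∈ -W := f.2 hnegW
  obtain ⟨N, hN⟩ := eventually_atTop.1 hev
  -- pick approximating values from the dense set
  have hpick : ∀ n : ℕ, ∃ d : X, d ∈ D' ∧ d - (f : ℕ → X) n ∈ W := by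
    intro n
    have hopen : IsOpen (((f : ℕ → X) n + ·) '' interior W) :=
      (isOpenMap_add_left ((f : ℕ → X) n)) _ isOpen_interior
    have h0W : (0 : X) ∈ interior W := mem_interior_iff_mem_nhds.2 hW
    obtain ⟨d, hdD, hd⟩ := Dd.exists_mem_open hopen
      ⟨(f : ℕ → X) n + 0, ⟨0, h0W, rfl⟩⟩
    obtain ⟨w, hw, rfl⟩ := hd
    exact ⟨(f : ℕ → X) n + w, Set.mem_insert_of_mem _ hdD,
      by simpa using interior_subset hw⟩
  choose d hd1 hd2 using hpick
  set g : ℕ → X := fun n => if n < N then d n else 0 with hgdef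
  have hg0 : ∀ n ≥ N, g n = 0 := fun n hn => if_neg (not_lt.2 hn)
  have hgc0 : Tendsto g atTop (𝓝 (0 : X)) := by
    refine tendsto_const_nhds.congr' ?_
    filter_upwards [eventually_ge_atTop N] with n hn
    exact (hg0 n hn).symm
  have hgW : ∀ n, g n - (f : ℕ → X) n ∈ W := by
    intro n
    by_cases h : n < N
    · simpa [hgdef, h] using hd2 n
    · have : (f : ℕ → X) n ∈ -W := hN n (not_lt.1 h)
      simpa [hgdef, h, zero_sub] using Set.mem_neg.1 this
  have hgV : g ∈ V := by
    have : (fun n => g n - (f : ℕ → X) n) ∈ {h : ℕ → X | ∀ n, h n ∈ W} := hgW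
    have h2 := hsubW this
    have heq : (↑f + fun n => g n - (f : ℕ → X) n) = g := by
      funext n; simp
    have h3 : (↑f + fun n => g n - (f : ℕ → X) n) ∈ V := h2
    rwa [heq] at h3
  refine ⟨⟨g, hgc0⟩, hVU hgV, ?_⟩
  refine ⟨fun n => ?_, N, hg0⟩
  by_cases h : n < N
  · simpa [hgdef, h] using hd1 n
  · simp [hgdef, h, hD']
end

section
/- If X is a connected Hausdorff topological abelian group, then c0(X) with the topology induced by the uniform topology is connected. -/
open Filter Topology

theorem aux13 (X : Type) [AddCommGroup X] [TopologicalSpace X] [IsTopologicalAddGroup X]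
    [ConnectedSpace X]
    (Y : Type) [AddCommGroup Y] [TopologicalSpace Y] [IsTopologicalAddGroup Y]
    (e : Y ≃+ (ℕ → X))
    (hb : (𝓝 (0 : Y)).HasBasis (fun V : Set X => V ∈ 𝓝 (0 : X))
      (fun V : Set X => {y : Y | ∀ n, e y n ∈ V})) :
    ConnectedSpace {y : Y // Tendsto (e y) atTop (𝓝 (0 : X))} := by
  classical
  set s : Set Y := {y : Y | Tendsto (e y) atTop (𝓝 (0 : X))} with hs
  -- truncation homs
  have hj : ∀ N : ℕ, ∃ j : (ℕ → X) →+ Y, ∀ x n, e (j x) n = if n < N then x n else 0 := by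
    intro N
    refine ⟨(e.symm.toAddMonoidHom).comp
      { toFun := fun x n => if n < N then x n else 0
        map_zero' := by ext n; simp
        map_add' := by intro a b; ext n; by_cases h : n < N <;> simp [h] }, ?_⟩
    intro x n
    simp
  choose j hjcoord using hj
  have hcont : ∀ N, Continuous (j N) := by
    intro N
    refine continuous_of_continuousAt_zero (j N) ?_
    have h0 : j N 0 = 0 := map_zero (j N)
    rw [ContinuousAt, h0, hb.tendsto_right_iff]
    intro V hV
    have hmem : (Set.Iio N).pi (fun _ => V) ∈ 𝓝 (0 : ℕ → X) :=
      set_pi_mem_nhds (Set.finite_Iio N) (fun a _ => hV)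
    filter_upwards [hmem] with x hx n
    rw [hjcoord]
    by_cases h : n < N
    · simpa [h] using hx n h
    · simpa [h] using mem_of_mem_nhds hV
  set T : Set Y := ⋃ N, Set.range (j N) with hT
  have hTpre : IsPreconnected T := by
    rw [hT, ← Set.sUnion_range]
    refine isPreconnected_sUnion 0 _ ?_ ?_
    · rintro _ ⟨N, rfl⟩
      exact ⟨0, map_zero (j N)⟩
    · rintro _ ⟨N, rfl⟩
      exact (isConnected_range (hcont N)).isPreconnected
  have hTs : T ⊆ s := by
    rintro _ ⟨_, ⟨N, rfl⟩, x, rfl⟩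
    have : e (j N x) =ᶠ[atTop] (0 : ℕ → X) := by
      filter_upwards [eventually_ge_atTop N] with n hn
      simp [hjcoord, not_lt.mpr hn]
    exact (tendsto_congr' this).mpr tendsto_const_nhds
  have hsc : s ⊆ closure T := by
    intro y hy
    have hby : (𝓝 y).HasBasis (fun V : Set X => V ∈ 𝓝 (0 : X))
        (fun V => (fun z => y + z) '' {z : Y | ∀ n, e z n ∈ V}) := by
      rw [← map_add_left_nhds_zero y]
      exact hb.map _
    rw [mem_closure_iff_nhds_basis hby]
    intro V hV
    have hV' : (fun x : X => -x) ⁻¹' V ∈ 𝓝 (0 : X) := by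
      have hneg : Tendsto (fun x : X => -x) (𝓝 0) (𝓝 (0 : X)) := by
        simpa using (continuous_neg (G := X)).tendsto (0 : X)
      exact hneg hV
    obtain ⟨N, hN⟩ := mem_atTop_sets.mp (hy hV')
    refine ⟨j N (e y), Set.mem_iUnion.mpr ⟨N, ⟨e y, rfl⟩⟩, j N (e y) - y, ?_, by simp⟩
    intro n
    rw [map_sub]
    simp only [Pi.sub_apply, hjcoord]
    by_cases h : n < N
    · simpa [h] using mem_of_mem_nhds hV
    · simpa [h] using hN n (not_lt.mp h)
  have hconn : IsConnected s := by
    refine ⟨⟨0, ?_⟩, hTpre.subset_closure hTs hsc⟩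
    simp only [hs, Set.mem_setOf_eq, map_zero]
    exact tendsto_const_nhds.congr (by simp)
  exact Subtype.connectedSpace hconn

/-- If `X` is connected Hausdorff, then `c₀(X)` with the topology induced by the uniform
topology is connected. -/
theorem stmt13 (X : Type) [AddCommGroup X] [TopologicalSpace X] [IsTopologicalAddGroup X]
    [T2Space X] [ConnectedSpace X]
    (τ : TopologicalSpace (ℕ → X)) (hg : @IsTopologicalAddGroup (ℕ → X) τ _)
    (hb : (@nhds (ℕ → X) τ 0).HasBasis (fun V : Set X => V ∈ 𝓝 (0 : X))
      (fun V : Set X => {f : ℕ → X | ∀ n, f n ∈ V})) :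
    @ConnectedSpace {f : ℕ → X // Tendsto f atTop (𝓝 (0 : X))}
      (TopologicalSpace.induced Subtype.val τ) := by
  exact @aux13 X _ ‹_› ‹_› ‹_› (ℕ → X) _ τ hg (AddEquiv.refl _) hb
end

section
/- Let X be a compact Hausdorff topological abelian group with X ≠ {0}. The map sending an ultrafilter F on N to the ultrafilter-limit homomorphism χ_F : X^N → X is injective; consequently the set CHom((X^N, u), X) of continuous homomorphisms has cardinality at least 2^c. -/
open Filter Topology

namespace Stmt18Aux

/-! ### Ultrafilter limits as additive homomorphisms -/

variable {X : Type} [AddCommGroup X] [TopologicalSpace X] [IsTopologicalAddGroup X]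
  [CompactSpace X] [T2Space X]

noncomputable def ulim (F : Ultrafilter ℕ) (f : ℕ → X) : X := (F.map f).lim

lemma tendsto_ulim (F : Ultrafilter ℕ) (f : ℕ → X) :
    Tendsto f (F : Filter ℕ) (𝓝 (ulim F f)) := by
  have h := (F.map f).le_nhds_lim
  rwa [Ultrafilter.coe_map] at h

noncomputable def chi (F : Ultrafilter ℕ) : (ℕ → X) →+ X where
  toFun := ulim F
  map_zero' := tendsto_nhds_unique (tendsto_ulim F 0) tendsto_const_nhds
  map_add' f g := tendsto_nhds_unique (tendsto_ulim F (f + g))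
    (((tendsto_ulim F f).add (tendsto_ulim F g)))

lemma tendsto_chi (F : Ultrafilter ℕ) (f : ℕ → X) :
    Tendsto f (F : Filter ℕ) (𝓝 (chi F f)) := tendsto_ulim F f

lemma chi_continuous (τ : TopologicalSpace (ℕ → X)) (hg : @IsTopologicalAddGroup (ℕ → X) τ _)
    (hb : (@nhds (ℕ → X) τ 0).HasBasis (fun V : Set X => V ∈ 𝓝 (0 : X))
      (fun V : Set X => {f : ℕ → X | ∀ n, f n ∈ V})) (F : Ultrafilter ℕ) :
    @Continuous (ℕ → X) X τ _ (chi F) := by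
  letI := τ
  haveI := hg
  apply continuous_of_continuousAt_zero (chi (X := X) F)
  rw [ContinuousAt, map_zero]
  rw [hb.tendsto_iff (Filter.basis_sets (𝓝 (0 : X)))]
  intro W hW
  obtain ⟨V, hV, hVc, hVW⟩ := exists_mem_nhds_isClosed_subset hW
  refine ⟨V, hV, fun f hf => hVW ?_⟩
  exact hVc.mem_of_tendsto (tendsto_chi F f) (Filter.Eventually.of_forall hf)

/-- Injectivity of `F ↦ χ_F` (abstract form). -/
lemma part1 (hX : ∃ a : X, a ≠ 0) (F₁ F₂ : Ultrafilter ℕ) (χ₁ χ₂ : (ℕ → X) →+ X)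
    (h₁ : ∀ f : ℕ → X, Tendsto f (F₁ : Filter ℕ) (𝓝 (χ₁ f)))
    (h₂ : ∀ f : ℕ → X, Tendsto f (F₂ : Filter ℕ) (𝓝 (χ₂ f)))
    (hχ : χ₁ = χ₂) : F₁ = F₂ := by
  classical
  by_contra hne
  obtain ⟨a, ha⟩ := hX
  have hle : ¬((F₁ : Filter ℕ) ≤ (F₂ : Filter ℕ)) :=
    fun h => hne (Ultrafilter.coe_le_coe.mp h)
  rw [Filter.le_def] at hle
  push_neg at hle
  obtain ⟨s, hs₂, hs₁⟩ := hle
  have hsc₁ : sᶜ ∈ F₁ := Ultrafilter.compl_mem_iff_notMem.mpr hs₁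
  set f : ℕ → X := fun n => if n ∈ s then a else 0 with hf
  have hχ₂ : χ₂ f = a := by
    refine tendsto_nhds_unique ((h₂ f).congr' ?_) tendsto_const_nhds
    filter_upwards [hs₂] with n hn
    simp [hf, hn]
  have hχ₁ : χ₁ f = 0 := by
    refine tendsto_nhds_unique ((h₁ f).congr' ?_) tendsto_const_nhds
    filter_upwards [hsc₁] with n hn
    rw [Set.mem_compl_iff] at hn
    simp [hf, hn]
  rw [hχ, hχ₂] at hχ₁
  exact ha hχ₁

/-! ### An independent family of subsets of a countable set -/

/-- The countable index set. -/
abbrev I : Type := Finset ℕ × Finset (Finset ℕ)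

open Classical in
/-- Trace of a set of naturals on a finite set. -/
noncomputable def trace (s : Set ℕ) (F : Finset ℕ) : Finset ℕ :=
  F.filter (· ∈ s)

/-- The independent family, indexed by `Set ℕ`. -/
noncomputable def bigA (s : Set ℕ) : Set I := {p | trace s p.1 ∈ p.2}

open Classical in
lemma indep (P Q : Finset (Set ℕ)) (hPQ : ∀ x ∈ P, ∀ y ∈ Q, x ≠ y) :
    ∃ p : I, (∀ x ∈ P, p ∈ bigA x) ∧ ∀ y ∈ Q, p ∉ bigA y := by
  -- a separating point for each pair of distinct sets
  set sep : Set ℕ → Set ℕ → ℕ := fun x y =>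
    if h : ∃ n, ¬((n ∈ x) ↔ (n ∈ y)) then h.choose else 0 with hsep
  have hsep_spec : ∀ x y : Set ℕ, x ≠ y → ¬((sep x y ∈ x) ↔ (sep x y ∈ y)) := by
    intro x y hxy
    have h : ∃ n, ¬((n ∈ x) ↔ (n ∈ y)) := by
      by_contra hc
      push_neg at hc
      exact hxy (Set.ext hc)
    simpa [hsep, dif_pos h] using h.choose_spec
  set F : Finset ℕ := P.biUnion (fun x => Q.image (fun y => sep x y)) with hF
  set 𝒜 : Finset (Finset ℕ) := P.image (fun x => trace x F) with h𝒜
  refine ⟨(F, 𝒜), ?_, ?_⟩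
  · intro x hx
    exact Finset.mem_image_of_mem (fun x => trace x F) hx
  · intro y hy hmem
    simp only [bigA, Set.mem_setOf_eq] at hmem
    rw [h𝒜, Finset.mem_image] at hmem
    obtain ⟨x, hx, hxy⟩ := hmem
    have hne : x ≠ y := hPQ x hx y hy
    have hn : ¬((sep x y ∈ x) ↔ (sep x y ∈ y)) := hsep_spec x y hne
    have hnF : sep x y ∈ F := by
      rw [hF, Finset.mem_biUnion]
      exact ⟨x, hx, Finset.mem_image_of_mem _ hy⟩
    have hx' : sep x y ∈ trace x F ↔ sep x y ∈ x := by
      simp [trace, hnF]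
    have hy' : sep x y ∈ trace y F ↔ sep x y ∈ y := by
      simp [trace, hnF]
    rw [hxy] at hx'
    exact hn (hx'.symm.trans hy')

open Classical in
/-- The family selected by `s : Set (Set ℕ)`. -/
noncomputable def g (s : Set (Set ℕ)) (x : Set ℕ) : Set I :=
  if x ∈ s then bigA x else (bigA x)ᶜ

lemma g_neBot (s : Set (Set ℕ)) : (Filter.generate (Set.range (g s))).NeBot := by
  classical
  rw [Filter.generate_neBot_iff]
  intro t hts htf
  -- choose preimages
  choose x hx using fun u (hu : u ∈ t) => hts hu
  haveI := htf.to_subtype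
  have hSfin : (Set.range (fun u : t => x u u.2)).Finite :=
    Set.finite_range _
  set S : Set (Set ℕ) := Set.range (fun u : t => x u u.2) with hS
  set P : Finset (Set ℕ) := (hSfin.toFinset.filter (· ∈ s)) with hP
  set Q : Finset (Set ℕ) := (hSfin.toFinset.filter (· ∉ s)) with hQ
  have hPQ : ∀ a ∈ P, ∀ b ∈ Q, a ≠ b := by
    intro a haP b hbQ hab
    rw [hP, Finset.mem_filter] at haP
    rw [hQ, Finset.mem_filter] at hbQ
    exact hbQ.2 (hab ▸ haP.2)
  obtain ⟨p, hp₁, hp₂⟩ := indep P Q hPQ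
  refine ⟨p, ?_⟩
  rw [Set.mem_sInter]
  intro u hu
  have hgu : g s (x u hu) = u := hx u hu
  have hmemS : x u hu ∈ hSfin.toFinset := by
    rw [Set.Finite.mem_toFinset]
    exact ⟨⟨u, hu⟩, rfl⟩
  by_cases hxs : x u hu ∈ s
  · have : p ∈ bigA (x u hu) := hp₁ _ (by rw [hP, Finset.mem_filter]; exact ⟨hmemS, hxs⟩)
    rwa [← hgu, g, if_pos hxs]
  · have : p ∉ bigA (x u hu) := hp₂ _ (by rw [hQ, Finset.mem_filter]; exact ⟨hmemS, hxs⟩)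
    rw [← hgu, g, if_neg hxs]
    exact this

/-- The ultrafilter on `I` determined by `s`. -/
noncomputable def UF (s : Set (Set ℕ)) : Ultrafilter I :=
  haveI := g_neBot s
  Ultrafilter.of (Filter.generate (Set.range (g s)))

lemma g_mem_UF (s : Set (Set ℕ)) (x : Set ℕ) : g s x ∈ UF s := by
  haveI := g_neBot s
  exact Ultrafilter.of_le (Filter.generate (Set.range (g s)))
    (Filter.GenerateSets.basic ⟨x, rfl⟩)

lemma UF_injective : Function.Injective UF := by
  intro s t hst
  by_contra hne
  have : ∃ x : Set ℕ, (x ∈ s ∧ x ∉ t) ∨ (x ∈ t ∧ x ∉ s) := by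
    by_contra hc
    push_neg at hc
    exact hne (Set.ext fun x => ⟨(hc x).1, (hc x).2⟩)
  obtain ⟨x, hx⟩ := this
  rcases hx with ⟨hxs, hxt⟩ | ⟨hxt, hxs⟩
  · have h1 : bigA x ∈ UF s := by have := g_mem_UF s x; rwa [g, if_pos hxs] at this
    have h2 : (bigA x)ᶜ ∈ UF s := by
      have := g_mem_UF t x; rw [g, if_neg hxt] at this; rwa [← hst] at this
    exact (Filter.compl_notMem h1) h2
  · have h1 : bigA x ∈ UF t := by have := g_mem_UF t x; rwa [g, if_pos hxt] at this
    have h2 : (bigA x)ᶜ ∈ UF t := by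
      have := g_mem_UF s x; rw [g, if_neg hxs] at this; rwa [hst] at this
    exact (Filter.compl_notMem h1) h2

/-- Transport to ultrafilters on `ℕ`. -/
noncomputable def UFN (s : Set (Set ℕ)) : Ultrafilter ℕ :=
  (UF s).map (Denumerable.eqv I)

lemma UFN_injective : Function.Injective UFN := by
  intro s t hst
  apply UF_injective
  have h : ∀ u : Ultrafilter I, (u.map (Denumerable.eqv I)).map (Denumerable.eqv I).symm = u := by
    intro u
    apply Ultrafilter.coe_injective
    simp [Ultrafilter.coe_map, Filter.map_map]
  have := congrArg (fun u : Ultrafilter ℕ => u.map (Denumerable.eqv I).symm) hst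
  simpa [UFN, h] using this

lemma card_ultrafilter : 2 ^ Cardinal.continuum ≤ Cardinal.mk (Ultrafilter ℕ) := by
  have h := Cardinal.mk_le_of_injective UFN_injective
  have he : Cardinal.mk (Set (Set ℕ)) = 2 ^ Cardinal.continuum := by
    rw [Cardinal.mk_set, Cardinal.mk_set, Cardinal.mk_nat, Cardinal.two_power_aleph0]
  rwa [he] at h

end Stmt18Aux

/-- For a nontrivial compact Hausdorff topological abelian group `X`, the assignment
`F ↦ χ_F` of ultrafilter-limit homomorphisms is injective; consequently the set of
continuous homomorphisms `(X^ℕ, u) → X` has cardinality at least `2 ^ 𝔠`. -/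
theorem stmt18 (X : Type) [AddCommGroup X] [TopologicalSpace X] [IsTopologicalAddGroup X]
    [CompactSpace X] [T2Space X] (hX : ∃ a : X, a ≠ 0)
    (τ : TopologicalSpace (ℕ → X)) (hg : @IsTopologicalAddGroup (ℕ → X) τ _)
    (hb : (@nhds (ℕ → X) τ 0).HasBasis (fun V : Set X => V ∈ 𝓝 (0 : X))
      (fun V : Set X => {f : ℕ → X | ∀ n, f n ∈ V})) :
    (∀ (F₁ F₂ : Ultrafilter ℕ) (χ₁ χ₂ : (ℕ → X) →+ X),
        (∀ f : ℕ → X, Tendsto f (F₁ : Filter ℕ) (𝓝 (χ₁ f))) →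
        (∀ f : ℕ → X, Tendsto f (F₂ : Filter ℕ) (𝓝 (χ₂ f))) → χ₁ = χ₂ → F₁ = F₂) ∧
      2 ^ Cardinal.continuum ≤
        Cardinal.mk {χ : (ℕ → X) →+ X // @Continuous (ℕ → X) X τ _ χ} := by
  constructor
  · exact fun F₁ F₂ χ₁ χ₂ h₁ h₂ hχ => Stmt18Aux.part1 hX F₁ F₂ χ₁ χ₂ h₁ h₂ hχ
  · have hinj : Function.Injective
        (fun F : Ultrafilter ℕ =>
          (⟨Stmt18Aux.chi F, Stmt18Aux.chi_continuous τ hg hb F⟩ :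
            {χ : (ℕ → X) →+ X // @Continuous (ℕ → X) X τ _ χ})) := by
      intro F₁ F₂ h
      have hχ : Stmt18Aux.chi (X := X) F₁ = Stmt18Aux.chi (X := X) F₂ :=
        congrArg Subtype.val h
      exact Stmt18Aux.part1 hX F₁ F₂ _ _ (Stmt18Aux.tendsto_chi F₁)
        (Stmt18Aux.tendsto_chi F₂) hχ
    calc 2 ^ Cardinal.continuum ≤ Cardinal.mk (Ultrafilter ℕ) := Stmt18Aux.card_ultrafilter
      _ ≤ _ := Cardinal.mk_le_of_injective hinj
end

section
/- Let G be S^N with the uniform topology, where S is the circle group. Then the dual group G^ = CHom(G, S) has cardinality exactly 2^c. -/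
open Filter Topology Set

namespace Stmt19Aux

noncomputable section

/-- Countable index type for the independent family. -/
abbrev X : Type := Finset ℚ × Finset (Finset ℚ)

/-- The independent family of subsets of `X`, indexed by reals. -/
def A (x : ℝ) : Set X := {p | p.1.filter (fun q : ℚ => (q : ℝ) < x) ∈ p.2}

lemma indep (s t : Finset ℝ) (hdisj : ∀ x ∈ s, x ∉ t) :
    ∃ p : X, (∀ x ∈ s, p ∈ A x) ∧ ∀ y ∈ t, p ∉ A y := by
  classical
  set u : Finset ℝ := s ∪ t with hu
  set g : ℝ × ℝ → ℚ := fun ab =>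
    if h : ab.1 < ab.2 then (exists_rat_btwn h).choose else 0 with hgdef
  set F : Finset ℚ := (u ×ˢ u).image g with hF
  set 𝒜 : Finset (Finset ℚ) := s.image (fun x => F.filter (fun q : ℚ => (q : ℝ) < x)) with h𝒜
  refine ⟨(F, 𝒜), ?_, ?_⟩
  · intro x hx
    exact Finset.mem_image_of_mem (fun x => F.filter (fun q : ℚ => (q : ℝ) < x)) hx
  · intro y hy hmem
    simp only [A, Set.mem_setOf_eq] at hmem
    obtain ⟨x, hx, hEq⟩ := Finset.mem_image.1 hmem
    have hxy : x ≠ y := fun h => hdisj x hx (h ▸ hy)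
    have hmemprod : ∀ a ∈ u, ∀ b ∈ u, a < b → ∃ q : ℚ, q ∈ F ∧ a < (q:ℝ) ∧ (q:ℝ) < b := by
      intro a ha b hb hab
      refine ⟨g (a, b), Finset.mem_image_of_mem _ (Finset.mem_product.2 ⟨ha, hb⟩), ?_⟩
      have : g (a, b) = (exists_rat_btwn hab).choose := dif_pos hab
      rw [this]
      exact (exists_rat_btwn hab).choose_spec
    have hxu : x ∈ u := Finset.mem_union_left _ hx
    have hyu : y ∈ u := Finset.mem_union_right _ hy
    rcases lt_or_gt_of_ne hxy with h | h
    · obtain ⟨q, hqF, hq1, hq2⟩ := hmemprod x hxu y hyu h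
      have h1 : q ∈ F.filter (fun q : ℚ => (q : ℝ) < y) := Finset.mem_filter.2 ⟨hqF, hq2⟩
      rw [← hEq] at h1
      exact absurd (Finset.mem_filter.1 h1).2 (not_lt.2 hq1.le)
    · obtain ⟨q, hqF, hq1, hq2⟩ := hmemprod y hyu x hxu h
      have h1 : q ∈ F.filter (fun q : ℚ => (q : ℝ) < x) := Finset.mem_filter.2 ⟨hqF, hq2⟩
      rw [hEq] at h1
      exact absurd (Finset.mem_filter.1 h1).2 (not_lt.2 hq1.le)

/-- The generating family of sets for the ultrafilter associated to `S ⊆ ℝ`. -/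
def fam (S : Set ℝ) : Set (Set X) := (fun x => A x) '' S ∪ (fun x => (A x)ᶜ) '' Sᶜ

lemma fam_neBot (S : Set ℝ) : NeBot (Filter.generate (fam S)) := by
  classical
  rw [Filter.generate_neBot_iff]
  intro t hts htfin
  have hch : ∀ u ∈ t, ∃ r : ℝ, (r ∈ S ∧ A r = u) ∨ (r ∉ S ∧ (A r)ᶜ = u) := by
    intro u hu
    rcases hts hu with ⟨x, hx, rfl⟩ | ⟨x, hx, rfl⟩
    exacts [⟨x, Or.inl ⟨hx, rfl⟩⟩, ⟨x, Or.inr ⟨hx, rfl⟩⟩]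
  choose! c hc using hch
  set s₁ : Finset ℝ := (htfin.toFinset.image c).filter (fun r => r ∈ S) with hs₁
  set s₂ : Finset ℝ := (htfin.toFinset.image c).filter (fun r => r ∉ S) with hs₂
  have hdisj : ∀ x ∈ s₁, x ∉ s₂ := by
    intro x hx hx2
    exact (Finset.mem_filter.1 hx2).2 (Finset.mem_filter.1 hx).2
  obtain ⟨p, hp1, hp2⟩ := indep s₁ s₂ hdisj
  refine ⟨p, ?_⟩
  intro u hu
  have hcu := hc u hu
  have hmemim : c u ∈ htfin.toFinset.image c :=
    Finset.mem_image_of_mem c (htfin.mem_toFinset.2 hu)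
  rcases hcu with ⟨hS, hA⟩ | ⟨hS, hA⟩
  · have : c u ∈ s₁ := Finset.mem_filter.2 ⟨hmemim, hS⟩
    rw [← hA]
    exact hp1 _ this
  · have : c u ∈ s₂ := Finset.mem_filter.2 ⟨hmemim, hS⟩
    rw [← hA]
    exact hp2 _ this

/-- An ultrafilter extending the family `fam S`. -/
def U (S : Set ℝ) : Ultrafilter X :=
  (@Ultrafilter.exists_le _ (Filter.generate (fam S)) (fam_neBot S)).choose

lemma U_le (S : Set ℝ) : ↑(U S) ≤ Filter.generate (fam S) :=
  (@Ultrafilter.exists_le _ (Filter.generate (fam S)) (fam_neBot S)).choose_spec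

lemma mem_U_iff {S : Set ℝ} {x : ℝ} : A x ∈ U S ↔ x ∈ S := by
  constructor
  · intro hA
    by_contra hx
    have h1 : (A x)ᶜ ∈ U S :=
      U_le S (Filter.mem_generate_of_mem (Or.inr ⟨x, hx, rfl⟩))
    exact (Ultrafilter.compl_mem_iff_notMem.1 h1) hA
  · intro hx
    exact U_le S (Filter.mem_generate_of_mem (Or.inl ⟨x, hx, rfl⟩))

instance : Infinite X := by
  have : Infinite (Finset ℚ) := inferInstance
  infer_instance

/-- An equivalence between the countable index type and `ℕ`. -/
def e : X ≃ ℕ := @Denumerable.eqv X (Denumerable.ofEncodableOfInfinite X)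

/-- The map from subsets of reals to ultrafilters on `ℕ`. -/
def Phi (S : Set ℝ) : Ultrafilter ℕ := (U S).map e

lemma mem_Phi_iff {S : Set ℝ} {x : ℝ} : e '' A x ∈ Phi S ↔ x ∈ S := by
  rw [Phi, Ultrafilter.mem_map, Equiv.injective e |>.preimage_image, mem_U_iff]

lemma Phi_injective : Function.Injective Phi := by
  intro S T h
  ext x
  rw [← mem_Phi_iff (S := S), ← mem_Phi_iff (S := T), h]

section Char

lemma tendsto_charLim (V : Ultrafilter ℕ) (f : ℕ → Circle) :
    Tendsto f ↑V (𝓝 ((V.map f).lim)) := by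
  have h := (V.map f).le_nhds_lim
  rwa [Ultrafilter.coe_map] at h

lemma charLim_eq (V : Ultrafilter ℕ) (f : ℕ → Circle) {a : Circle}
    (h : Tendsto f ↑V (𝓝 a)) : (V.map f).lim = a :=
  tendsto_nhds_unique (tendsto_charLim V f) h

/-- The ultrafilter-limit character. -/
def char (V : Ultrafilter ℕ) : (ℕ → Circle) →* Circle where
  toFun f := (V.map f).lim
  map_one' := charLim_eq V 1 tendsto_const_nhds
  map_mul' f g := charLim_eq V (f * g) ((tendsto_charLim V f).mul (tendsto_charLim V g))

lemma char_apply (V : Ultrafilter ℕ) (f : ℕ → Circle) : char V f = (V.map f).lim := rfl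

lemma exists_ne_one : ∃ g : Circle, g ≠ 1 := by
  refine ⟨Circle.exp Real.pi, fun h => ?_⟩
  have harg : Complex.arg (Circle.exp Real.pi : ℂ) = Real.pi :=
    Circle.arg_exp (by linarith [Real.pi_pos]) le_rfl
  rw [h] at harg
  simp only [Circle.coe_one, Complex.arg_one] at harg
  exact Real.pi_ne_zero harg.symm

lemma char_injective : Function.Injective char := by
  intro V W h
  by_contra hne
  have hex : ∃ s, s ∈ V ∧ s ∉ W := by
    by_contra hcon
    push_neg at hcon
    exact hne (Ultrafilter.eq_of_le (Filter.le_def.2 hcon)).symm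
  obtain ⟨s, hsV, hsW⟩ := hex
  have hsc : sᶜ ∈ W := Ultrafilter.compl_mem_iff_notMem.2 hsW
  obtain ⟨g, hg⟩ := exists_ne_one
  classical
  set f : ℕ → Circle := fun n => if n ∈ s then g else 1 with hf
  have h1 : char V f = g := by
    apply charLim_eq
    apply Tendsto.congr' _ (tendsto_const_nhds (x := g))
    filter_upwards [hsV] with n hn
    simp [hf, hn]
  have h2 : char W f = 1 := by
    apply charLim_eq
    apply Tendsto.congr' _ (tendsto_const_nhds (x := (1 : Circle)))
    filter_upwards [hsc] with n hn
    simp only [Set.mem_compl_iff] at hn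
    simp [hf, hn]
  rw [h] at h1
  rw [h1] at h2
  exact hg h2

lemma char_continuous (τ : TopologicalSpace (ℕ → Circle))
    (hg : @IsTopologicalGroup (ℕ → Circle) τ _)
    (hb : (@nhds (ℕ → Circle) τ 1).HasBasis (fun V : Set Circle => V ∈ 𝓝 (1 : Circle))
      (fun V : Set Circle => {f : ℕ → Circle | ∀ n, f n ∈ V}))
    (V : Ultrafilter ℕ) : @Continuous (ℕ → Circle) Circle τ _ (char V) := by
  letI := τ
  apply continuous_of_continuousAt_one (char V)
  rw [ContinuousAt, map_one]
  rw [hb.tendsto_left_iff]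
  intro t ht
  obtain ⟨W, hWmem, hWc, hWt⟩ := exists_mem_nhds_isClosed_subset ht
  refine ⟨W, hWmem, fun f hf => hWt ?_⟩
  exact hWc.mem_of_tendsto (tendsto_charLim V f) (Eventually.of_forall hf)

end Char

end

end Stmt19Aux

/-- The dual group of `𝕊^ℕ` with the uniform topology has cardinality exactly `2 ^ 𝔠`. -/
theorem stmt19
    (τ : TopologicalSpace (ℕ → Circle)) (hg : @IsTopologicalGroup (ℕ → Circle) τ _)
    (hb : (@nhds (ℕ → Circle) τ 1).HasBasis (fun V : Set Circle => V ∈ 𝓝 (1 : Circle))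
      (fun V : Set Circle => {f : ℕ → Circle | ∀ n, f n ∈ V})) :
    Cardinal.mk {χ : (ℕ → Circle) →* Circle // @Continuous (ℕ → Circle) Circle τ _ χ} =
      2 ^ Cardinal.continuum := by
  open Stmt19Aux Cardinal in
  apply le_antisymm
  · -- upper bound
    have hC : #Circle ≤ Cardinal.continuum := by
      have h := Cardinal.mk_le_of_injective
        (f := (Subtype.val : Circle → ℂ)) Subtype.val_injective
      rwa [mk_complex] at h
    have hF : #(ℕ → Circle) ≤ Cardinal.continuum := by
      calc #(ℕ → Circle) = #Circle ^ (#ℕ) := (Cardinal.power_def _ _).symm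
        _ ≤ Cardinal.continuum ^ (ℵ₀ : Cardinal) := by
            rw [Cardinal.mk_nat]; exact Cardinal.power_le_power_right hC
        _ = Cardinal.continuum := by
            rw [← Cardinal.two_power_aleph0, ← Cardinal.power_mul,
              Cardinal.aleph0_mul_aleph0]
    calc #{χ : (ℕ → Circle) →* Circle // @Continuous (ℕ → Circle) Circle τ _ χ}
        ≤ #((ℕ → Circle) → Circle) := by
          apply Cardinal.mk_le_of_injective (f := fun c : {χ : (ℕ → Circle) →* Circle // @Continuous (ℕ → Circle) Circle τ _ χ} => (⇑c.1 : (ℕ → Circle) → Circle))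
          intro c₁ c₂ hcc
          exact Subtype.ext (DFunLike.coe_injective hcc)
      _ = #Circle ^ #(ℕ → Circle) := (Cardinal.power_def _ _).symm
      _ ≤ Cardinal.continuum ^ #(ℕ → Circle) := Cardinal.power_le_power_right hC
      _ ≤ Cardinal.continuum ^ Cardinal.continuum :=
          Cardinal.power_le_power_left Cardinal.continuum_ne_zero hF
      _ = 2 ^ Cardinal.continuum := Cardinal.power_self_eq Cardinal.aleph0_le_continuum
  · -- lower bound
    have hinj : Function.Injective
        (fun S : Set ℝ =>
          (⟨char (Phi S), char_continuous τ hg hb (Phi S)⟩ :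
            {χ : (ℕ → Circle) →* Circle // @Continuous (ℕ → Circle) Circle τ _ χ})) := by
      intro S T h
      apply Phi_injective
      apply char_injective
      exact congrArg Subtype.val h
    have h := Cardinal.mk_le_of_injective hinj
    rwa [Cardinal.mk_set, Cardinal.mk_real] at h
end
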